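/- arXiv:1906.07261 — 7 statements merged into one kernel-verified Lean document; each statement's English description precedes it below -/
import Mathlib

section
/- If λ = iω with ω > 0 is a root of the characteristic equation λ + ηκã(e^{-λτ₁} + e^{-λτ₂}) = 0 with η, κ, ã, τ₁, τ₂ > 0, then ω(τ₁+τ₂) = (2n+1)π for some nonnegative integer n. -/
open Complex Real

/-! Writing `θ = ω(τ₁+τ₂)/2` and `δ = ω(τ₁-τ₂)/2`, the sum of the two delay terms factors as
`e^{-iωτ₁} + e^{-iωτ₂} = 2 cos δ · e^{-iθ}`. The root equation then says that the real multiple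
`2ηκã cos δ · e^{-iθ}` equals `-iω`, which is purely imaginary and nonzero; hence `cos θ = 0`,
and since `θ > 0` it is an odd positive multiple of `π/2`. -/

theorem exp_neg_mul_I_add_exp_neg_mul_I (x y : ℂ) :
    exp (-(x * I)) + exp (-(y * I)) = 2 * cos ((x - y) / 2) * exp (-((x + y) / 2 * I)) := by
  rw [Complex.cos, mul_div_cancel₀ _ two_ne_zero, add_mul, ← Complex.exp_add, ← Complex.exp_add]
  ring_nf

theorem Real.exists_nat_two_mul_eq_of_cos_eq_zero {θ : ℝ} (hθ : 0 < θ) (h : Real.cos θ = 0) :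
    ∃ n : ℕ, 2 * θ = (2 * n + 1) * π := by
  obtain ⟨k, rfl⟩ := Real.cos_eq_zero_iff.1 h
  have hk : (-1 : ℤ) < k := by
    suffices (-1 : ℝ) < k by exact_mod_cast this
    by_contra! hk
    nlinarith [Real.pi_pos]
  lift k to ℕ using by omega
  exact ⟨k, by push_cast; ring⟩

theorem cos_half_mul_add_eq_zero_of_root (c ω τ₁ τ₂ : ℝ) (hω : ω ≠ 0)
    (hroot : I * ω + (c : ℂ) * (exp (-(I * ω) * τ₁) + exp (-(I * ω) * τ₂)) = 0) :
    Real.cos (ω * (τ₁ + τ₂) / 2) = 0 := by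
  have hsum : exp (-(I * ω) * τ₁) + exp (-(I * ω) * τ₂) = 2 * Real.cos (ω * (τ₁ - τ₂) / 2) *
      (Real.cos (ω * (τ₁ + τ₂) / 2) - Real.sin (ω * (τ₁ + τ₂) / 2) * I) := by
    have h := exp_neg_mul_I_add_exp_neg_mul_I (ω * τ₁) (ω * τ₂)
    rw [show -((ω * τ₁ + ω * τ₂ : ℂ) / 2 * I) = ((-(ω * (τ₁ + τ₂) / 2) : ℝ) : ℂ) * I by
        push_cast; ring,
      exp_mul_I, ← ofReal_cos, ← ofReal_sin, Real.cos_neg, Real.sin_neg] at h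
    convert h using 3 <;> push_cast <;> ring_nf
  rw [hsum] at hroot
  generalize Real.cos (ω * (τ₁ - τ₂) / 2) = p at hroot
  generalize Real.cos (ω * (τ₁ + τ₂) / 2) = C at hroot ⊢
  generalize Real.sin (ω * (τ₁ + τ₂) / 2) = S at hroot
  have him : ω = c * (2 * p) * S := by
    linear_combination (by simpa using congrArg im hroot : ω + -(c * (2 * p * S)) = 0)
  obtain ⟨hc, hp⟩ : c ≠ 0 ∧ p ≠ 0 := by
    have : c * (2 * p) ≠ 0 := fun h ↦ hω (by rw [him, h, zero_mul])
    simpa using this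
  simpa [hc, hp] using congrArg re hroot

theorem imaginary_root_frequency_general (η κ a τ₁ τ₂ ω : ℝ) (hτ₁ : 0 < τ₁) (hτ₂ : 0 < τ₂) (hω : 0 < ω)
    (hroot : (Complex.I * ω) + (η * κ * a : ℂ) *
      (Complex.exp (-(Complex.I * ω) * τ₁) + Complex.exp (-(Complex.I * ω) * τ₂)) = 0) :
    ∃ n : ℕ, ω * (τ₁ + τ₂) = (2 * n + 1) * Real.pi := by
  have hcos := cos_half_mul_add_eq_zero_of_root (η * κ * a) ω τ₁ τ₂ hω.ne' (by exact_mod_cast hroot)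
  have hθ : 0 < ω * (τ₁ + τ₂) / 2 := by positivity
  obtain ⟨n, hn⟩ := Real.exists_nat_two_mul_eq_of_cos_eq_zero hθ hcos
  exact ⟨n, by linarith⟩

/-- A purely imaginary root iω (ω > 0) of λ + ηκã(e^{-λτ₁}+e^{-λτ₂}) = 0 must satisfy
ω(τ₁+τ₂) = (2n+1)π for some nonnegative integer n. -/
theorem imaginary_root_frequency (η κ a τ₁ τ₂ ω : ℝ) (hη : 0 < η) (hκ : 0 < κ)
    (ha : 0 < a) (hτ₁ : 0 < τ₁) (hτ₂ : 0 < τ₂) (hω : 0 < ω)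
    (hroot : (Complex.I * ω) + (η * κ * a : ℂ) *
      (Complex.exp (-(Complex.I * ω) * τ₁) + Complex.exp (-(Complex.I * ω) * τ₂)) = 0) :
    ∃ n : ℕ, ω * (τ₁ + τ₂) = (2 * n + 1) * Real.pi :=
  imaginary_root_frequency_general η κ a τ₁ τ₂ ω hτ₁ hτ₂ hω hroot
end

section
/- Let ω₀ = π/(τ₁+τ₂). Then λ = iω₀ is a root of λ + ηκã(e^{-λτ₁} + e^{-λτ₂}) = 0 if and only if η = π / (2κã(τ₁+τ₂) cos(π(τ₁-τ₂)/(2(τ₁+τ₂)))). -/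
open Complex Real

/-- With ω₀ = π/(τ₁+τ₂), λ = iω₀ is a root of λ + ηκã(e^{-λτ₁}+e^{-λτ₂}) = 0 iff
η = π / (2κã(τ₁+τ₂) cos(π(τ₁-τ₂)/(2(τ₁+τ₂)))). -/
theorem hopf_critical_value (η κ a τ₁ τ₂ : ℝ) (hη : 0 < η) (hκ : 0 < κ)
    (ha : 0 < a) (hτ₁ : 0 < τ₁) (hτ₂ : 0 < τ₂) :
    (Complex.I * (Real.pi / (τ₁ + τ₂) : ℝ) + (η * κ * a : ℂ) *
        (Complex.exp (-(Complex.I * (Real.pi / (τ₁ + τ₂) : ℝ)) * τ₁) +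
          Complex.exp (-(Complex.I * (Real.pi / (τ₁ + τ₂) : ℝ)) * τ₂)) = 0) ↔
      η = Real.pi /
        (2 * κ * a * (τ₁ + τ₂) * Real.cos (Real.pi * (τ₁ - τ₂) / (2 * (τ₁ + τ₂)))) := by
  have hs : (0:ℝ) < τ₁ + τ₂ := by linarith
  set ω : ℝ := Real.pi / (τ₁ + τ₂) with hωdef
  have hπ : Real.pi / (τ₁ + τ₂) * (τ₁ + τ₂) = Real.pi := div_mul_cancel₀ _ (ne_of_gt hs)
  have hω2 : ω * τ₂ = Real.pi - ω * τ₁ := by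
    rw [hωdef]; linear_combination hπ
  have hc : Real.cos (Real.pi * (τ₁ - τ₂) / (2 * (τ₁ + τ₂))) = Real.sin (ω * τ₁) := by
    have : Real.pi * (τ₁ - τ₂) / (2 * (τ₁ + τ₂)) = -(Real.pi / 2 - ω * τ₁) := by
      rw [hωdef, div_eq_iff (by positivity : (2 * (τ₁ + τ₂)) ≠ 0)]
      linear_combination (-2 * τ₁) * hπ
    rw [this, Real.cos_neg, Real.cos_pi_div_two_sub]
  have hxlt : |Real.pi * (τ₁ - τ₂) / (2 * (τ₁ + τ₂))| < Real.pi / 2 := by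
    have h1 : |(τ₁ - τ₂) / (τ₁ + τ₂)| < 1 := by
      rw [abs_div, abs_of_pos hs, div_lt_one hs]
      exact abs_lt.mpr ⟨by linarith, by linarith⟩
    have : Real.pi * (τ₁ - τ₂) / (2 * (τ₁ + τ₂)) = (Real.pi / 2) * ((τ₁ - τ₂) / (τ₁ + τ₂)) :=
      (div_mul_div_comm Real.pi 2 (τ₁ - τ₂) (τ₁ + τ₂)).symm
    rw [this, abs_mul, abs_of_pos (by positivity : (0:ℝ) < Real.pi / 2)]
    calc Real.pi / 2 * |(τ₁ - τ₂) / (τ₁ + τ₂)| < Real.pi / 2 * 1 := by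
          exact mul_lt_mul_of_pos_left h1 (by positivity)
      _ = Real.pi / 2 := by ring
  have hcpos : 0 < Real.cos (Real.pi * (τ₁ - τ₂) / (2 * (τ₁ + τ₂))) := by
    apply Real.cos_pos_of_mem_Ioo
    constructor
    · linarith [abs_lt.mp hxlt]
    · linarith [abs_lt.mp hxlt]
  have hspos := hcpos
  rw [hc] at hspos
  have e1 : -(Complex.I * (ω:ℝ)) * (τ₁:ℝ) = ((-(ω * τ₁) : ℝ) : ℂ) * Complex.I := by
    push_cast; ring
  have e2 : -(Complex.I * (ω:ℝ)) * (τ₂:ℝ) = ((-(ω * τ₂) : ℝ) : ℂ) * Complex.I := by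
    push_cast; ring
  rw [e1, e2, Complex.exp_mul_I, Complex.exp_mul_I,
    ← Complex.ofReal_cos, ← Complex.ofReal_sin, ← Complex.ofReal_cos, ← Complex.ofReal_sin,
    Real.cos_neg, Real.cos_neg, Real.sin_neg, Real.sin_neg,
    hω2, Real.cos_pi_sub, Real.sin_pi_sub]
  rw [Complex.ext_iff]
  simp only [Complex.add_re, Complex.add_im, Complex.mul_re, Complex.mul_im,
    Complex.neg_re, Complex.neg_im, Complex.I_re, Complex.I_im,
    Complex.ofReal_re, Complex.ofReal_im, Complex.zero_re, Complex.zero_im]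
  constructor
  · rintro ⟨h1, h2⟩
    have hkey : ω = 2 * η * κ * a * Real.sin (ω * τ₁) := by nlinarith [h2]
    rw [hc]
    rw [hωdef] at hkey
    rw [eq_div_iff (mul_pos (by positivity) hspos).ne', hωdef]
    have h3 := hπ; rw [hkey] at h3; linear_combination h3
  · intro h
    rw [hc] at h
    have hkey : η * (2 * κ * a * (τ₁ + τ₂) * Real.sin (ω * τ₁)) = Real.pi := by
      rw [h, div_mul_cancel₀ _ (mul_pos (by positivity) hspos).ne']
    constructor
    · ring
    · have : ω * (τ₁ + τ₂) = Real.pi := by rw [hωdef]; field_simp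
      nlinarith [hkey, this]
end

section
/- At the critical bifurcation value η_c = π/(κC(τ₁+τ₂)cos(ω₀(τ₁-τ₂)/2)) with ω₀ = π/(τ₁+τ₂) and ã = C/2, the quantity Re(dλ/dη) evaluated at λ = iω₀ equals ω₀κã(τ₁ sin(ω₀τ₁) + τ₂ sin(ω₀τ₂)) / (Φ₁² + Φ₂²), where Φ₁ = 1 - η_cãκτ₁cos(ω₀τ₁) - η_cãκτ₂cos(ω₀τ₂) and Φ₂ = η_cãκτ₁sin(ω₀τ₁) + η_cãκτ₂sin(ω₀τ₂), and this quantity is strictly positive. -/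
open Complex Real

/-- At the critical value η_c, the real part of dλ/dη evaluated at λ = iω₀ equals
ω₀κã(τ₁ sin(ω₀τ₁) + τ₂ sin(ω₀τ₂))/(Φ₁² + Φ₂²) and is strictly positive. -/
theorem transversality_condition (κ C τ₁ τ₂ : ℝ) (hκ : 0 < κ) (hC : 0 < C)
    (hτ₁ : 0 < τ₁) (hτ₂ : 0 < τ₂) :
    let ω₀ : ℝ := Real.pi / (τ₁ + τ₂)
    let a : ℝ := C / 2
    let ηc : ℝ := Real.pi / (κ * C * (τ₁ + τ₂) * Real.cos (ω₀ * (τ₁ - τ₂) / 2))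
    let Φ₁ : ℝ := 1 - ηc * a * κ * τ₁ * Real.cos (ω₀ * τ₁) -
      ηc * a * κ * τ₂ * Real.cos (ω₀ * τ₂)
    let Φ₂ : ℝ := ηc * a * κ * τ₁ * Real.sin (ω₀ * τ₁) +
      ηc * a * κ * τ₂ * Real.sin (ω₀ * τ₂)
    (((-(κ * a : ℂ) * (Complex.exp (-(Complex.I * ω₀) * τ₁) +
          Complex.exp (-(Complex.I * ω₀) * τ₂))) /
        (1 - (ηc * κ * a : ℂ) * ((τ₁ : ℂ) * Complex.exp (-(Complex.I * ω₀) * τ₁) +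
          (τ₂ : ℂ) * Complex.exp (-(Complex.I * ω₀) * τ₂)))).re =
      ω₀ * κ * a * (τ₁ * Real.sin (ω₀ * τ₁) + τ₂ * Real.sin (ω₀ * τ₂)) /
        (Φ₁ ^ 2 + Φ₂ ^ 2)) ∧
    0 < ω₀ * κ * a * (τ₁ * Real.sin (ω₀ * τ₁) + τ₂ * Real.sin (ω₀ * τ₂)) /
        (Φ₁ ^ 2 + Φ₂ ^ 2) := by
  intro ω₀ a ηc Φ₁ Φ₂
  have hsum : 0 < τ₁ + τ₂ := by linarith
  have hω : 0 < ω₀ := div_pos Real.pi_pos hsum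
  -- basic identities
  have hωsum : ω₀ * (τ₁ + τ₂) = Real.pi := by
    exact div_mul_cancel₀ _ hsum.ne'
  have h2 : ω₀ * τ₂ = Real.pi - ω₀ * τ₁ := by nlinarith [hωsum]
  have hc2 : Real.cos (ω₀ * τ₂) = -Real.cos (ω₀ * τ₁) := by
    rw [h2, Real.cos_pi_sub]
  have hs2 : Real.sin (ω₀ * τ₂) = Real.sin (ω₀ * τ₁) := by
    rw [h2, Real.sin_pi_sub]
  have hhalf : ω₀ * (τ₁ - τ₂) / 2 = ω₀ * τ₁ - Real.pi / 2 := by nlinarith [hωsum]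
  have hcs : Real.cos (ω₀ * (τ₁ - τ₂) / 2) = Real.sin (ω₀ * τ₁) := by
    rw [hhalf, Real.cos_sub_pi_div_two]
  have hτ₁lt : ω₀ * τ₁ < Real.pi := by
    nlinarith [hωsum, mul_pos hω hτ₂]
  have hs1pos : 0 < Real.sin (ω₀ * τ₁) := Real.sin_pos_of_pos_of_lt_pi (mul_pos hω hτ₁) hτ₁lt
  set s : ℝ := Real.sin (ω₀ * τ₁) with hs
  set c : ℝ := Real.cos (ω₀ * τ₁) with hc
  -- key: ηc * κ * a * (2 * s) = ω₀
  have hηc : ηc * κ * a = ω₀ / (2 * s) := by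
    simp only [ηc, a, ω₀, hcs, ← hs]
    field_simp
  -- rewrite exponentials
  have he1 : Complex.exp (-(Complex.I * ω₀) * τ₁) = (c : ℂ) - (s : ℂ) * Complex.I := by
    have : (-(Complex.I * ω₀) * τ₁ : ℂ) = ((-(ω₀ * τ₁) : ℝ) : ℂ) * Complex.I := by
      push_cast; ring
    rw [this]
    apply Complex.ext
    · rw [Complex.exp_ofReal_mul_I_re, Real.cos_neg]; simp [← hc]
    · rw [Complex.exp_ofReal_mul_I_im, Real.sin_neg]; simp [← hs]
  have he2 : Complex.exp (-(Complex.I * ω₀) * τ₂) = -(c : ℂ) - (s : ℂ) * Complex.I := by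
    have : (-(Complex.I * ω₀) * τ₂ : ℂ) = ((-(ω₀ * τ₂) : ℝ) : ℂ) * Complex.I := by
      push_cast; ring
    rw [this]
    apply Complex.ext
    · rw [Complex.exp_ofReal_mul_I_re, Real.cos_neg, hc2]; simp
    · rw [Complex.exp_ofReal_mul_I_im, Real.sin_neg, hs2]; simp
  have hΦ₁ : Φ₁ = 1 - ηc * a * κ * τ₁ * c + ηc * a * κ * τ₂ * c := by
    simp only [Φ₁, hc2]; ring
  have hΦ₂ : Φ₂ = ηc * a * κ * (τ₁ + τ₂) * s := by
    simp only [Φ₂, hs2]; ring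
  have hE : ηc * a * κ * (2 * s) = ω₀ := by
    rw [show ηc * a * κ = ηc * κ * a from by ring, hηc]
    field_simp
  have hzw : (-(κ * a : ℂ) * (Complex.exp (-(Complex.I * ω₀) * τ₁) +
      Complex.exp (-(Complex.I * ω₀) * τ₂))) = ((2 * κ * a * s : ℝ) : ℂ) * Complex.I := by
    rw [he1, he2]; push_cast; ring
  have hw : (1 - (ηc * κ * a : ℂ) * ((τ₁ : ℂ) * Complex.exp (-(Complex.I * ω₀) * τ₁) +
      (τ₂ : ℂ) * Complex.exp (-(Complex.I * ω₀) * τ₂))) = (Φ₁ : ℂ) + (Φ₂ : ℂ) * Complex.I := by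
    rw [he1, he2, hΦ₁, hΦ₂]
    push_cast
    ring
  have haκ : 0 < κ * a := by positivity
  clear_value ω₀ a ηc Φ₁ Φ₂ s c
  constructor
  · rw [hzw, hw, Complex.div_re]
    simp only [Complex.normSq_apply, Complex.add_re, Complex.add_im,
      Complex.mul_re, Complex.mul_im, Complex.I_re, Complex.I_im,
      Complex.ofReal_re, Complex.ofReal_im]
    have hD : 0 < Φ₁ ^ 2 + Φ₂ ^ 2 := by
      have hΦ₂pos : 0 < Φ₂ := by
        rw [hΦ₂]
        nlinarith [hE, mul_pos hω hsum]
      positivity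
    rw [← add_div]
    rw [div_eq_div_iff (by nlinarith [hD]) (by nlinarith [hD])]
    rw [hs2, hΦ₂]
    linear_combination ((Φ₁ ^ 2 + (ηc * a * κ * (τ₁ + τ₂) * s) ^ 2) * (κ * a * s * (τ₁ + τ₂))) * hE
  · have hΦ₂pos : 0 < Φ₂ := by
      rw [hΦ₂]
      nlinarith [hE, mul_pos hω hsum]
    have hD : 0 < Φ₁ ^ 2 + Φ₂ ^ 2 := by positivity
    rw [hs2]
    apply div_pos _ hD
    have hrw : ω₀ * κ * a * (τ₁ * s + τ₂ * s) = ω₀ * (κ * a) * ((τ₁ + τ₂) * s) := by ring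
    rw [hrw]
    exact mul_pos (mul_pos hω haκ) (mul_pos hsum hs1pos)
end

section
/- If η, a₁, a₂, τ₁, τ₂ > 0 satisfy ηa₁τ₁ + ηa₂τ₂ < 1, then the characteristic equation λ + ηa₁e^{-λτ₁} + ηa₂e^{-λτ₂} = 0 has no purely imaginary root λ = iω with ω real. -/
/-!
On the imaginary axis, the imaginary part of `F(iω) = iω + ∑ cᵢ e^{-iωτᵢ}` vanishes only if
`ω = ∑ cᵢ sin(ωτᵢ)`. Since `|sin x| ≤ |x|`, this gives `|ω| ≤ (∑ |cᵢ| |τᵢ|) |ω|`, forcing `ω = 0`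
when `∑ |cᵢ| |τᵢ| < 1`; and `F(0) = ∑ cᵢ`, which is nonzero when all coefficients are positive.
-/

open Complex

section

variable {ι : Type*} (s : Finset ι) (c τ : ι → ℝ)

/-- The characteristic function `λ + ∑ᵢ cᵢ e^{-λτᵢ}` of `x'(t) = -∑ᵢ cᵢ x(t - τᵢ)`. -/
noncomputable def delayCharFun (z : ℂ) : ℂ :=
  z + ∑ i ∈ s, (c i : ℂ) * exp (-z * τ i)

theorem delayCharFun_zero : delayCharFun s c τ 0 = ∑ i ∈ s, (c i : ℂ) := by
  simp [delayCharFun]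

theorem im_delayCharFun_mul_I (ω : ℝ) :
    (delayCharFun s c τ (ω * I)).im = ω - ∑ i ∈ s, c i * Real.sin (ω * τ i) := by
  have hexp : ∀ i, -(ω * I) * τ i = ((-(ω * τ i) : ℝ) : ℂ) * I := fun i => by push_cast; ring
  simp only [delayCharFun, hexp, add_im, mul_I_im, ofReal_re, im_sum, im_ofReal_mul,
    exp_ofReal_mul_I_im, Real.sin_neg, mul_neg, Finset.sum_neg_distrib, sub_eq_add_neg]

theorem eq_zero_of_eq_sum_mul_sin {ω : ℝ} (h : ω = ∑ i ∈ s, c i * Real.sin (ω * τ i))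
    (hs : ∑ i ∈ s, |c i| * |τ i| < 1) : ω = 0 := by
  by_contra hω
  have hbound : |ω| ≤ (∑ i ∈ s, |c i| * |τ i|) * |ω| :=
    calc |ω| = |∑ i ∈ s, c i * Real.sin (ω * τ i)| := congrArg _ h
      _ ≤ ∑ i ∈ s, |c i * Real.sin (ω * τ i)| := Finset.abs_sum_le_sum_abs _ _
      _ ≤ ∑ i ∈ s, |c i| * |ω * τ i| := by
        gcongr with i
        rw [abs_mul]
        exact mul_le_mul_of_nonneg_left Real.abs_sin_le_abs (abs_nonneg _)
      _ = (∑ i ∈ s, |c i| * |τ i|) * |ω| := by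
        rw [Finset.sum_mul]
        refine Finset.sum_congr rfl fun i _ => ?_
        rw [abs_mul]; ring
  nlinarith [abs_pos.mpr hω]

theorem delayCharFun_mul_I_ne_zero (hc : ∑ i ∈ s, c i ≠ 0)
    (hs : ∑ i ∈ s, |c i| * |τ i| < 1) (ω : ℝ) : delayCharFun s c τ (ω * I) ≠ 0 := by
  intro hroot
  have hω : ω = 0 := by
    refine eq_zero_of_eq_sum_mul_sin s c τ ?_ hs
    have := im_delayCharFun_mul_I s c τ ω
    rw [hroot, zero_im] at this
    linarith
  subst hω
  rw [ofReal_zero, zero_mul, delayCharFun_zero] at hroot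
  exact hc (by exact_mod_cast hroot)

end

/-- If ηa₁τ₁ + ηa₂τ₂ < 1, the two-delay characteristic equation has no purely
imaginary root. -/
theorem no_imaginary_root_of_sufficient (η a₁ a₂ τ₁ τ₂ : ℝ) (hη : 0 < η)
    (ha₁ : 0 < a₁) (ha₂ : 0 < a₂) (hτ₁ : 0 < τ₁) (hτ₂ : 0 < τ₂)
    (hcond : η * a₁ * τ₁ + η * a₂ * τ₂ < 1) :
    ∀ ω : ℝ, Complex.I * ω + (η * a₁ : ℂ) * Complex.exp (-(Complex.I * ω) * τ₁) +
      (η * a₂ : ℂ) * Complex.exp (-(Complex.I * ω) * τ₂) ≠ 0 := by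
  intro ω
  have hc₁ : 0 < η * a₁ := mul_pos hη ha₁
  have hc₂ : 0 < η * a₂ := mul_pos hη ha₂
  have hroot := delayCharFun_mul_I_ne_zero Finset.univ ![η * a₁, η * a₂] ![τ₁, τ₂]
    (by simpa [Fin.sum_univ_two] using (add_pos hc₁ hc₂).ne')
    (by simpa [Fin.sum_univ_two, abs_of_pos, hc₁, hc₂, hτ₁, hτ₂] using hcond) ω
  simpa [delayCharFun, Fin.sum_univ_two, mul_comm I, add_assoc] using hroot
end

section
/- If η, a₁, a₂, τ₁, τ₂ > 0 satisfy ηa₁τ₁ + ηa₂τ₂ < 1, then every root λ of the characteristic equation λ + ηa₁e^{-λτ₁} + ηa₂e^{-λτ₂} = 0 satisfies Re(λ) < 0. -/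
/-!
Suppose `Re λ ≥ 0` and set `C = ∑ cᵢ > 0`. Since `exp` is `1`-Lipschitz on the closed left
half-plane, `|1 - e^{-λτ}| ≤ |λ| τ`, so the equation `λ + C = ∑ cᵢ (1 - e^{-λτᵢ})` gives
`|λ + C| ≤ |λ| ∑ cᵢτᵢ ≤ |λ|`. But adding a positive real to a point of the closed right
half-plane strictly increases its modulus.
-/

open Complex

theorem Complex.norm_exp_sub_exp_le_of_re_nonpos {z w : ℂ} (hz : z.re ≤ 0) (hw : w.re ≤ 0) :
    ‖exp w - exp z‖ ≤ ‖w - z‖ := by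
  simpa only [one_mul] using
    (convex_halfSpace_re_le 0).norm_image_sub_le_of_norm_hasDerivWithin_le (C := 1)
      (fun x _ => (hasDerivAt_exp x).hasDerivWithinAt)
      (fun x hx => by rw [norm_exp]; exact Real.exp_le_one_iff.mpr hx) hz hw

theorem Complex.norm_one_sub_exp_neg_mul_le {z : ℂ} (hz : 0 ≤ z.re) {τ : ℝ} (hτ : 0 ≤ τ) :
    ‖1 - exp (-z * τ)‖ ≤ ‖z‖ * τ := by
  have hre : (-z * τ).re ≤ 0 := by
    simpa [mul_re] using mul_nonneg hz hτ
  simpa [← exp_zero, norm_mul, abs_of_nonneg hτ] using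
    norm_exp_sub_exp_le_of_re_nonpos hre (le_refl (0 : ℂ).re)

theorem Complex.norm_lt_norm_add_ofReal {z : ℂ} (hz : 0 ≤ z.re) {r : ℝ} (hr : 0 < r) :
    ‖z‖ < ‖z + r‖ := by
  have hsq : ‖z + r‖ ^ 2 = ‖z‖ ^ 2 + 2 * r * z.re + r ^ 2 := by
    simp only [Complex.sq_norm, normSq_apply, add_re, add_im, ofReal_re, ofReal_im]
    ring
  exact lt_of_pow_lt_pow_left₀ 2 (norm_nonneg _) (by nlinarith)

theorem re_neg_of_add_sum_mul_exp_eq_zero {ι : Type*} (s : Finset ι) (c τ : ι → ℝ)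
    (hc : ∀ i ∈ s, 0 ≤ c i) (hτ : ∀ i ∈ s, 0 ≤ τ i) (hpos : 0 < ∑ i ∈ s, c i)
    (hsmall : ∑ i ∈ s, c i * τ i ≤ 1) {l : ℂ}
    (hl : l + ∑ i ∈ s, (c i : ℂ) * exp (-l * τ i) = 0) : l.re < 0 := by
  by_contra! hre
  have hsum : l + ↑(∑ i ∈ s, c i) = ∑ i ∈ s, (c i : ℂ) * (1 - exp (-l * τ i)) := by
    simp only [mul_sub, mul_one, Finset.sum_sub_distrib, ofReal_sum]
    linear_combination hl
  have hle : ‖l + ↑(∑ i ∈ s, c i)‖ ≤ ‖l‖ :=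
    calc ‖l + ↑(∑ i ∈ s, c i)‖ ≤ ∑ i ∈ s, c i * (‖l‖ * τ i) := by
          rw [hsum]
          refine (norm_sum_le _ _).trans (Finset.sum_le_sum fun i hi => ?_)
          rw [norm_mul, norm_real, Real.norm_of_nonneg (hc i hi)]
          exact mul_le_mul_of_nonneg_left (norm_one_sub_exp_neg_mul_le hre (hτ i hi)) (hc i hi)
      _ = ‖l‖ * ∑ i ∈ s, c i * τ i := by
          rw [Finset.mul_sum]; exact Finset.sum_congr rfl fun i _ => by ring
      _ ≤ ‖l‖ := mul_le_of_le_one_right (norm_nonneg l) hsmall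
  exact (norm_lt_norm_add_ofReal hre hpos).not_ge hle

/-- If ηa₁τ₁ + ηa₂τ₂ < 1, then every root of λ + ηa₁e^{-λτ₁} + ηa₂e^{-λτ₂} = 0
has negative real part. -/
theorem roots_in_left_half_plane (η a₁ a₂ τ₁ τ₂ : ℝ) (hη : 0 < η)
    (ha₁ : 0 < a₁) (ha₂ : 0 < a₂) (hτ₁ : 0 < τ₁) (hτ₂ : 0 < τ₂)
    (hcond : η * a₁ * τ₁ + η * a₂ * τ₂ < 1) :
    ∀ l : ℂ, l + (η * a₁ : ℂ) * Complex.exp (-l * τ₁) +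
      (η * a₂ : ℂ) * Complex.exp (-l * τ₂) = 0 → l.re < 0 := by
  intro l hl
  refine re_neg_of_add_sum_mul_exp_eq_zero Finset.univ ![η * a₁, η * a₂] ![τ₁, τ₂] ?_ ?_ ?_ ?_ ?_
  · simpa [Fin.forall_fin_two] using ⟨(mul_pos hη ha₁).le, (mul_pos hη ha₂).le⟩
  · simpa [Fin.forall_fin_two] using ⟨hτ₁.le, hτ₂.le⟩
  · simpa using add_pos (mul_pos hη ha₁) (mul_pos hη ha₂)
  · simpa using hcond.le
  · simpa [add_assoc] using hl
end

section
/- For the single-delay characteristic equation λ + ηae^{-λτ} = 0 with η, a, τ > 0, if ηaτ < 1 then every root satisfies Re(λ) < 0. -/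
/-!
Write `λ = x + iy` with `x ≥ 0`. Then `|e^{-λτ}| = e^{-xτ} ≤ 1`, so the equation forces
`|y| ≤ |λ| ≤ c` with `c = ηa`, hence `|yτ| ≤ cτ < π/2`. Taking real parts,
`x = -c e^{-xτ} cos(yτ) < 0`, a contradiction. The argument works whenever `cτ < π/2`.
-/

open Complex

namespace DelayCharacteristic

variable {c τ : ℝ} {z : ℂ}

theorem norm_exp_neg_mul_le_one (hz : 0 ≤ z.re) (hτ : 0 ≤ τ) : ‖exp (-z * τ)‖ ≤ 1 := by
  rw [norm_exp, Real.exp_le_one_iff]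
  simpa using mul_nonneg hz hτ

theorem abs_im_le_of_root (hc : 0 ≤ c) (hτ : 0 ≤ τ) (hz : 0 ≤ z.re)
    (h : z + c * exp (-z * τ) = 0) : |z.im| ≤ c := by
  have hz_eq : z = -(c * exp (-z * τ)) := eq_neg_of_add_eq_zero_left h
  calc |z.im| ≤ ‖z‖ := abs_im_le_norm z
    _ = c * ‖exp (-z * τ)‖ := by
      rw [congrArg norm hz_eq, norm_neg, norm_mul, norm_real, Real.norm_of_nonneg hc]
    _ ≤ c := mul_le_of_le_one_right hc (norm_exp_neg_mul_le_one hz hτ)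

theorem re_eq_of_root (h : z + c * exp (-z * τ) = 0) :
    z.re = -(c * Real.exp (-(z.re * τ)) * Real.cos (z.im * τ)) := by
  have hz_eq := congrArg re (eq_neg_of_add_eq_zero_left h)
  simpa [exp_re, mul_assoc] using hz_eq

theorem re_neg_of_root (hc : 0 < c) (hτ : 0 ≤ τ) (hcτ : c * τ < Real.pi / 2)
    (h : z + c * exp (-z * τ) = 0) : z.re < 0 := by
  by_contra! hz
  have him : |z.im * τ| < Real.pi / 2 := by
    rw [abs_mul, abs_of_nonneg hτ]
    exact lt_of_le_of_lt (mul_le_mul_of_nonneg_right (abs_im_le_of_root hc.le hτ hz h) hτ) hcτ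
  have hcos : 0 < Real.cos (z.im * τ) := Real.cos_pos_of_mem_Ioo (abs_lt.mp him)
  have hre := re_eq_of_root h
  have : 0 < c * Real.exp (-(z.re * τ)) * Real.cos (z.im * τ) := by positivity
  linarith

end DelayCharacteristic

/-- Single delay: if ηaτ < 1, every root of λ + ηae^{-λτ} = 0 has negative real part. -/
theorem single_delay_roots_left_half_plane (η a τ : ℝ) (hη : 0 < η) (ha : 0 < a)
    (hτ : 0 < τ) (hcond : η * a * τ < 1) :
    ∀ l : ℂ, l + (η * a : ℂ) * Complex.exp (-l * τ) = 0 → l.re < 0 := by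
  intro l hl
  have hcτ : η * a * τ < Real.pi / 2 := hcond.trans (by linarith [Real.pi_gt_three])
  exact DelayCharacteristic.re_neg_of_root (mul_pos hη ha) hτ.le hcτ (by exact_mod_cast hl)
end

section
/- Define f̃(θ) = (-2sin θ / (1 + 4sin⁴θ)) · ((π/2 - θ)cos(2θ)cos θ + cos(2θ)sin θ + (π/2)(cos²(2θ) + 2sin²θ)) for θ ∈ (0, π). Then f̃(θ) < 0 for all θ ∈ (0, π). -/
/-!
Write `c = cos 2θ`, so that `2 sin² θ = 1 - c` and the bracket of `f̃` equals
`c · q + (π/2)(c² - c + 1)` with `q = (π/2 - θ) cos θ + sin θ ∈ [0, π/2 + 1]`.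
For `c ≥ 0` this is positive term by term; for `c < 0` it is at least
`(π/2) c² + c + π/2`, a quadratic in `c` with negative discriminant `1 - π²`.
The prefactor `-2 sin θ / (1 + 4 sin⁴ θ)` is negative, hence so is `f̃`.
-/

open Real

lemma mul_add_mul_sq_sub_add_one_pos {a c q : ℝ} (ha : 1 / 2 < a) (hq₀ : 0 ≤ q)
    (hq : q ≤ a + 1) : 0 < c * q + a * (c ^ 2 - c + 1) := by
  rcases le_or_gt 0 c with hc | hc
  · nlinarith [mul_nonneg hc hq₀, sq_nonneg (c - 1 / 2)]
  · have hcq : c * (a + 1) ≤ c * q := mul_le_mul_of_nonpos_left hq hc.le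
    nlinarith [sq_nonneg (a * c + 1 / 2)]

namespace Real

lemma pi_div_two_sub_mul_cos_nonneg {θ : ℝ} (h₀ : 0 ≤ θ) (hπ : θ ≤ π) :
    0 ≤ (π / 2 - θ) * cos θ := by
  rcases le_or_gt θ (π / 2) with hle | hgt
  · exact mul_nonneg (by linarith) (cos_nonneg_of_mem_Icc ⟨by linarith, hle⟩)
  · exact mul_nonneg_of_nonpos_of_nonpos (by linarith)
      (cos_nonpos_of_pi_div_two_le_of_le hgt.le (by linarith))

lemma pi_div_two_sub_mul_cos_le {θ : ℝ} (h₀ : 0 ≤ θ) (hπ : θ ≤ π) :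
    (π / 2 - θ) * cos θ ≤ π / 2 :=
  calc (π / 2 - θ) * cos θ ≤ |π / 2 - θ| * |cos θ| := by
        rw [← abs_mul]; exact le_abs_self _
    _ ≤ π / 2 * 1 := by
        gcongr
        · exact abs_sub_le_iff.2 ⟨by linarith, by linarith⟩
        · exact abs_cos_le_one θ
    _ = π / 2 := mul_one _

end Real

/-- The quantity f̃(θ) determining the sign of Re(c₁(0)) for the proportionally fair
dual algorithm is negative on (0, π). -/
theorem f_tilde_negative (θ : ℝ) (h0 : 0 < θ) (hπ : θ < Real.pi) :
    (-2 * Real.sin θ / (1 + 4 * Real.sin θ ^ 4)) *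
      ((Real.pi / 2 - θ) * Real.cos (2 * θ) * Real.cos θ +
        Real.cos (2 * θ) * Real.sin θ +
        Real.pi / 2 * (Real.cos (2 * θ) ^ 2 + 2 * Real.sin θ ^ 2)) < 0 := by
  have hsin : 0 < sin θ := sin_pos_of_pos_of_lt_pi h0 hπ
  have hprefactor : -2 * sin θ / (1 + 4 * sin θ ^ 4) < 0 :=
    div_neg_of_neg_of_pos (by linarith) (by positivity)
  have hbracket_eq : (π / 2 - θ) * cos (2 * θ) * cos θ + cos (2 * θ) * sin θ +
      π / 2 * (cos (2 * θ) ^ 2 + 2 * sin θ ^ 2) =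
      cos (2 * θ) * ((π / 2 - θ) * cos θ + sin θ) +
        π / 2 * (cos (2 * θ) ^ 2 - cos (2 * θ) + 1) := by
    rw [cos_two_mul_eq_one_sub]; ring
  refine mul_neg_of_neg_of_pos hprefactor ?_
  rw [hbracket_eq]
  refine mul_add_mul_sq_sub_add_one_pos (by linarith [pi_gt_three]) ?_ ?_
  · linarith [pi_div_two_sub_mul_cos_nonneg h0.le hπ.le]
  · linarith [pi_div_two_sub_mul_cos_le h0.le hπ.le, sin_le_one θ]
end
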